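/- arXiv:0902.2559 — 8 statements merged into one kernel-verified Lean document; each statement's English description precedes it below -/
import Mathlib

section
/- If X and Y are Hermitian positive definite n×n matrices, then Tr[(X−Y)(Y⁻¹−X⁻¹)] ≥ 0. -/
/-!
Since `Y⁻¹ - X⁻¹ = Y⁻¹ (X - Y) X⁻¹`, the trace is `tr (D Y⁻¹ D · X⁻¹)` with `D = X - Y` Hermitian:
the trace of a product of two positive semidefinite matrices, which is nonnegative because
`tr (A Cᴴ C) = tr (C A Cᴴ)`.
-/

open Matrix ComplexOrder
open scoped MatrixOrder

theorem Matrix.PosSemidef.trace_mul_nonneg {n 𝕜 : Type*} [Fintype n] [RCLike 𝕜]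
    {A B : Matrix n n 𝕜} (hA : A.PosSemidef) (hB : B.PosSemidef) : 0 ≤ (A * B).trace := by
  classical
  obtain ⟨C, rfl⟩ := CStarAlgebra.nonneg_iff_eq_star_mul_self.mp hB.nonneg
  rw [star_eq_conjTranspose, ← mul_assoc, trace_mul_comm]
  simpa only [mul_assoc] using (hA.mul_mul_conjTranspose_same C).trace_nonneg

theorem trace_sub_mul_inv_sub_nonneg
    {n : ℕ} (X Y : Matrix (Fin n) (Fin n) ℂ)
    (hX : X.PosDef) (hY : Y.PosDef) :
    0 ≤ ((X - Y) * (Y⁻¹ - X⁻¹)).trace := by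
  have hXY : (X - Y)ᴴ = X - Y := (hX.isHermitian.sub hY.isHermitian).eq
  have hmid : ((X - Y) * Y⁻¹ * (X - Y)).PosSemidef := by
    simpa only [hXY] using hY.inv.posSemidef.conjTranspose_mul_mul_same (X - Y)
  rw [inv_sub_inv (iff_of_true hY.isUnit hX.isUnit), ← mul_assoc, ← mul_assoc]
  exact hmid.trace_mul_nonneg hX.inv.posSemidef
end

section
/- For Hermitian positive definite matrices X and Y, if X ≠ Y then Tr[(X−Y)(Y⁻¹−X⁻¹)] > 0. -/
/-!
With `D = X - Y` we have `Y⁻¹ - X⁻¹ = Y⁻¹ D X⁻¹`, so the trace is `Tr[D Y⁻¹ D X⁻¹]`. Writing the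
positive definite matrices as `Y⁻¹ = Sᴴ S` and `X⁻¹ = Rᴴ R` with `S`, `R` invertible, it equals the
squared Frobenius norm of `S D Rᴴ ≠ 0`.
-/

open Matrix ComplexOrder

namespace Matrix

variable {m n 𝕜 : Type*} [Fintype m] [Fintype n] [RCLike 𝕜]

theorem trace_conjTranspose_mul_self_pos {A : Matrix m n 𝕜} (hA : A ≠ 0) :
    0 < (Aᴴ * A).trace :=
  (posSemidef_conjTranspose_mul_self A).trace_nonneg.lt_of_ne'
    (trace_conjTranspose_mul_self_eq_zero_iff.not.mpr hA)

open scoped MatrixOrder Norms.L2Operator in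
theorem PosDef.exists_isUnit_eq_conjTranspose_mul_self [DecidableEq n] {A : Matrix n n 𝕜}
    (hA : A.PosDef) : ∃ S : Matrix n n 𝕜, IsUnit S ∧ A = Sᴴ * S :=
  CStarAlgebra.isStrictlyPositive_iff_eq_star_mul_self.mp hA.isStrictlyPositive

theorem PosDef.trace_conjTranspose_mul_mul_mul_pos {A B D : Matrix n n 𝕜}
    (hA : A.PosDef) (hB : B.PosDef) (hD : D ≠ 0) : 0 < (Dᴴ * A * D * B).trace := by
  classical
  obtain ⟨S, hS, rfl⟩ := hA.exists_isUnit_eq_conjTranspose_mul_self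
  obtain ⟨R, hR, rfl⟩ := hB.exists_isUnit_eq_conjTranspose_mul_self
  have hSDR : S * D * Rᴴ ≠ 0 := by
    rwa [Ne, (isUnit_conjTranspose R).mpr hR |>.mul_left_eq_zero, hS.mul_right_eq_zero]
  calc 0 < ((S * D * Rᴴ)ᴴ * (S * D * Rᴴ)).trace := trace_conjTranspose_mul_self_pos hSDR
    _ = (Dᴴ * (Sᴴ * S) * D * (Rᴴ * R)).trace := by
      simp only [conjTranspose_mul, conjTranspose_conjTranspose, Matrix.mul_assoc]
      rw [trace_mul_comm]
      simp only [Matrix.mul_assoc]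

end Matrix

theorem trace_sub_mul_inv_sub_pos
    {n : ℕ} (X Y : Matrix (Fin n) (Fin n) ℂ)
    (hX : X.PosDef) (hY : Y.PosDef) (hne : X ≠ Y) :
    0 < ((X - Y) * (Y⁻¹ - X⁻¹)).trace := by
  have hinv : Y⁻¹ - X⁻¹ = Y⁻¹ * (X - Y) * X⁻¹ := inv_sub_inv (by simp [hX.isUnit, hY.isUnit])
  have hherm : (X - Y)ᴴ = X - Y := (hX.isHermitian.sub hY.isHermitian).eq
  calc 0 < ((X - Y)ᴴ * Y⁻¹ * (X - Y) * X⁻¹).trace :=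
        hY.inv.trace_conjTranspose_mul_mul_mul_pos hX.inv (sub_ne_zero.mpr hne)
    _ = _ := by rw [hherm, hinv]; simp only [Matrix.mul_assoc]
end

section
/- Let A', A'', B', B'' be Hermitian positive semidefinite n×n matrices such that A' ⪰ A'' or A'' ⪰ A', and B' ⪰ B'' or B'' ⪰ B'. Define M = (A''−A')[(I+A')⁻¹ − (I+A'')⁻¹] and N = (B''−B')[(I+B'+A')⁻¹ − (I+B''+A'')⁻¹]. Then Tr(M+N) ≥ 0. -/
/-!
Put `D = A'' - A'`, `E = B'' - B'`, `P = (1 + A')⁻¹`, `Q = (1 + A'')⁻¹`, `S = (1 + B' + A')⁻¹`,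
`T = (1 + B'' + A'')⁻¹`. The resolvent identity `X⁻¹ - Y⁻¹ = X⁻¹ (Y - X) Y⁻¹` gives
`Tr M = Tr(DPDQ)` and `Tr N = Tr(ES(E+D)T)`, and `Tr(M + N)` is real because `M` and `N` are
products of two Hermitian matrices. For Hermitian `Z` the quantity `Tr(ZUZV)` is nonnegative and
monotone in positive semidefinite `U`, `V`, and inversion is operator antitone, so `S ≤ P` and
`T ≤ Q`. Polarizing the cross term then yields
`2 Re Tr(M + N) = (Tr(DPDQ) - Tr(DSDT)) + Tr(DPDQ) + Tr(ESET) + Tr((E+D)S(E+D)T) ≥ 0`.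
-/

open Matrix ComplexOrder
open scoped MatrixOrder

namespace Matrix

variable {𝕜 ι : Type*} [RCLike 𝕜] [Fintype ι]

lemma IsHermitian.star_trace_mul {A B : Matrix ι ι 𝕜} (hA : A.IsHermitian)
    (hB : B.IsHermitian) : star (A * B).trace = (A * B).trace := by
  rw [← trace_conjTranspose, conjTranspose_mul, hA.eq, hB.eq, trace_mul_comm]

lemma IsHermitian.star_trace_mul_mul_mul {A B C F : Matrix ι ι 𝕜} (hA : A.IsHermitian)
    (hB : B.IsHermitian) (hC : C.IsHermitian) (hF : F.IsHermitian) :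
    star (A * B * C * F).trace = (C * B * A * F).trace := by
  rw [← trace_conjTranspose]
  simp only [conjTranspose_mul, hA.eq, hB.eq, hC.eq, hF.eq]
  rw [trace_mul_comm]
  simp only [Matrix.mul_assoc]

variable [DecidableEq ι]

lemma trace_mul_nonneg {U V : Matrix ι ι 𝕜} (hU : 0 ≤ U) (hV : 0 ≤ V) :
    0 ≤ (U * V).trace := by
  have hs : (CFC.sqrt U)ᴴ = CFC.sqrt U := (CFC.sqrt_nonneg U).isSelfAdjoint
  have h := (hV.posSemidef.mul_mul_conjTranspose_same (CFC.sqrt U)).trace_nonneg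
  rwa [hs, Matrix.mul_assoc, trace_mul_comm, Matrix.mul_assoc, CFC.sqrt_mul_sqrt_self U hU,
    trace_mul_comm] at h

lemma IsHermitian.trace_mul_mul_mul_nonneg {Z U V : Matrix ι ι 𝕜} (hZ : Z.IsHermitian)
    (hU : 0 ≤ U) (hV : 0 ≤ V) : 0 ≤ (Z * U * Z * V).trace := by
  have hZUZ : 0 ≤ Z * U * Z := by
    simpa only [hZ.eq] using (hU.posSemidef.mul_mul_conjTranspose_same Z).nonneg
  exact trace_mul_nonneg hZUZ hV

lemma IsHermitian.trace_mul_mul_mul_mono {Z U U' V V' : Matrix ι ι 𝕜} (hZ : Z.IsHermitian)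
    (hU : 0 ≤ U) (hV' : 0 ≤ V') (hUU' : U ≤ U') (hVV' : V ≤ V') :
    (Z * U * Z * V).trace ≤ (Z * U' * Z * V').trace := by
  have hsplit : (Z * U' * Z * V').trace - (Z * U * Z * V).trace =
      (Z * (U' - U) * Z * V').trace + (Z * U * Z * (V' - V)).trace := by
    rw [← trace_add, ← trace_sub]
    congr 1
    noncomm_ring
  rw [← sub_nonneg, hsplit]
  exact add_nonneg (hZ.trace_mul_mul_mul_nonneg (sub_nonneg.2 hUU') hV')
    (hZ.trace_mul_mul_mul_nonneg hU (sub_nonneg.2 hVV'))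

open scoped Matrix.Norms.L2Operator in
lemma PosDef.inv_le_inv_of_le {X Y : Matrix ι ι ℂ} (hX : X.PosDef) (h : X ≤ Y) :
    Y⁻¹ ≤ X⁻¹ := by
  rw [nonsing_inv_eq_ringInverse, nonsing_inv_eq_ringInverse]
  exact CStarAlgebra.ringInverse_le_ringInverse h (isStrictlyPositive_iff_posDef.2 hX)

lemma PosSemidef.inv_one_add_add_le {A B : Matrix ι ι ℂ} (hA : A.PosSemidef)
    (hB : B.PosSemidef) : (1 + B + A)⁻¹ ≤ (1 + A)⁻¹ :=
  (PosDef.one.add_posSemidef hA).inv_le_inv_of_le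
    (add_le_add_left (le_add_of_nonneg_right hB.nonneg) A)

lemma re_trace_mul_mul_mul_add_nonneg {D E P Q S T : Matrix ι ι 𝕜} (hD : D.IsHermitian)
    (hE : E.IsHermitian) (hS : 0 ≤ S) (hT : 0 ≤ T) (hSP : S ≤ P) (hTQ : T ≤ Q) :
    0 ≤ RCLike.re ((D * P * D * Q).trace + (E * S * (E + D) * T).trace) := by
  set b : Matrix ι ι 𝕜 → Matrix ι ι 𝕜 → 𝕜 := fun X Y ↦ (X * S * Y * T).trace
  have hswap : star (b E D) = b D E :=
    hE.star_trace_mul_mul_mul hS.posSemidef.isHermitian hD hT.posSemidef.isHermitian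
  have hexpand : b (E + D) (E + D) = b E E + b E D + b D E + b D D := by
    simp only [b, add_mul, mul_add, trace_add]
    ring
  have hED : 0 ≤ b (E + D) (E + D) := (hE.add hD).trace_mul_mul_mul_nonneg hS hT
  have hEE : 0 ≤ b E E := hE.trace_mul_mul_mul_nonneg hS hT
  have hDD : 0 ≤ b D D := hD.trace_mul_mul_mul_nonneg hS hT
  have hmono : b D D ≤ (D * P * D * Q).trace :=
    hD.trace_mul_mul_mul_mono hS (hT.trans hTQ) hSP hTQ
  rw [RCLike.nonneg_iff] at hED hEE hDD
  rw [RCLike.le_iff_re_im] at hmono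
  have hre := congrArg RCLike.re hexpand
  have hre' := congrArg RCLike.re hswap
  simp only [map_add, RCLike.star_def, RCLike.conj_re] at hre hre' ⊢
  rw [mul_add, add_mul, trace_add, map_add]
  linarith [hED.1, hEE.1, hDD.1, hmono.1]

end Matrix

theorem trace_M_add_N_nonneg_general
    {n : ℕ} (A' A'' B' B'' : Matrix (Fin n) (Fin n) ℂ)
    (hA' : A'.PosSemidef) (hA'' : A''.PosSemidef)
    (hB' : B'.PosSemidef) (hB'' : B''.PosSemidef)
    (M N : Matrix (Fin n) (Fin n) ℂ)
    (hM : M = (A'' - A') * ((1 + A')⁻¹ - (1 + A'')⁻¹))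
    (hN : N = (B'' - B') * ((1 + B' + A')⁻¹ - (1 + B'' + A'')⁻¹)) :
    0 ≤ (M + N).trace := by
  have hA₁ : (1 + A').PosDef := PosDef.one.add_posSemidef hA'
  have hA₂ : (1 + A'').PosDef := PosDef.one.add_posSemidef hA''
  have hBA₁ : (1 + B' + A').PosDef := (PosDef.one.add_posSemidef hB').add_posSemidef hA'
  have hBA₂ : (1 + B'' + A'').PosDef := (PosDef.one.add_posSemidef hB'').add_posSemidef hA''
  have hD : (A'' - A').IsHermitian := hA''.isHermitian.sub hA'.isHermitian
  have hE : (B'' - B').IsHermitian := hB''.isHermitian.sub hB'.isHermitian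
  have hreal : star (M + N).trace = (M + N).trace := by
    rw [trace_add, star_add, hM, hN,
      hD.star_trace_mul (hA₁.inv.isHermitian.sub hA₂.inv.isHermitian),
      hE.star_trace_mul (hBA₁.inv.isHermitian.sub hBA₂.inv.isHermitian)]
  have hM' : M = (A'' - A') * (1 + A')⁻¹ * (A'' - A') * (1 + A'')⁻¹ := by
    rw [hM, Matrix.inv_sub_inv (iff_of_true hA₁.isUnit hA₂.isUnit)]
    noncomm_ring
  have hN' :
      N = (B'' - B') * (1 + B' + A')⁻¹ * ((B'' - B') + (A'' - A')) * (1 + B'' + A'')⁻¹ := by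
    rw [hN, Matrix.inv_sub_inv (iff_of_true hBA₁.isUnit hBA₂.isUnit)]
    noncomm_ring
  rw [RCLike.nonneg_iff, ← RCLike.conj_eq_iff_im]
  refine ⟨?_, hreal⟩
  rw [trace_add, hM', hN']
  exact re_trace_mul_mul_mul_add_nonneg hD hE hBA₁.inv.posSemidef.nonneg
    hBA₂.inv.posSemidef.nonneg (hA'.inv_one_add_add_le hB') (hA''.inv_one_add_add_le hB'')

theorem trace_M_add_N_nonneg
    {n : ℕ} (A' A'' B' B'' : Matrix (Fin n) (Fin n) ℂ)
    (hA' : A'.PosSemidef) (hA'' : A''.PosSemidef)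
    (hB' : B'.PosSemidef) (hB'' : B''.PosSemidef)
    (hAtot : (A' - A'').PosSemidef ∨ (A'' - A').PosSemidef)
    (hBtot : (B' - B'').PosSemidef ∨ (B'' - B').PosSemidef)
    (M N : Matrix (Fin n) (Fin n) ℂ)
    (hM : M = (A'' - A') * ((1 + A')⁻¹ - (1 + A'')⁻¹))
    (hN : N = (B'' - B') * ((1 + B' + A')⁻¹ - (1 + B'' + A'')⁻¹)) :
    0 ≤ (M + N).trace :=
  trace_M_add_N_nonneg_general A' A'' B' B'' hA' hA'' hB' hB'' M N hM hN
end

section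
/- If A ⪰ B ≻ 0 and C ⪰ D ⪰ 0 are Hermitian matrices, then Tr{(A−B)(B⁻¹−A⁻¹) + (C−D)[(B+D)⁻¹ − (A+C)⁻¹]} ≥ 0. -/
/-!
Both summands have the form `tr (P * Q)` with `P, Q ⪰ 0`: inversion is operator antitone on
positive definite matrices, so `B⁻¹ - A⁻¹ ⪰ 0` and `(B + D)⁻¹ - (A + C)⁻¹ ⪰ 0`, and
`tr (P * Q) = tr (√P * Q * √P) ≥ 0`.
-/

open Matrix ComplexOrder

open scoped MatrixOrder

namespace Matrix

lemma PosSemidef.trace_mul_nonneg_s6 {𝕜 n : Type*} [RCLike 𝕜] [Fintype n] {P Q : Matrix n n 𝕜}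
    (hP : P.PosSemidef) (hQ : Q.PosSemidef) : 0 ≤ (P * Q).trace := by
  classical
  set S := CFC.sqrt P
  have hSS : S * S = P := CFC.sqrt_mul_sqrt_self P hP.nonneg
  have hS : Sᴴ = S := (CFC.sqrt_nonneg P).posSemidef.isHermitian.eq
  calc 0 ≤ (S * Q * Sᴴ).trace := (hQ.mul_mul_conjTranspose_same S).trace_nonneg
    _ = (P * Q).trace := by rw [hS, trace_mul_cycle, hSS]

open scoped Matrix.Norms.L2Operator in
lemma PosDef.inv_le_inv_of_le_s6 {n : Type*} [Fintype n] [DecidableEq n] {A B : Matrix n n ℂ}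
    (hB : B.PosDef) (hBA : B ≤ A) : A⁻¹ ≤ B⁻¹ := by
  rw [nonsing_inv_eq_ringInverse, nonsing_inv_eq_ringInverse]
  exact CStarAlgebra.ringInverse_le_ringInverse hBA (isStrictlyPositive_iff_posDef.mpr hB)

end Matrix

theorem trace_case1_nonneg_general
    {n : ℕ} (A B C D : Matrix (Fin n) (Fin n) ℂ)
    (hB : B.PosDef)
    (hAB : (A - B).PosSemidef)
    (hD : D.PosSemidef)
    (hCD : (C - D).PosSemidef) :
    0 ≤ ((A - B) * (B⁻¹ - A⁻¹) + (C - D) * ((B + D)⁻¹ - (A + C)⁻¹)).trace := by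
  have hBD : B + D ≤ A + C := by
    rw [Matrix.le_iff, add_sub_add_comm]
    exact hAB.add hCD
  have hinv : A⁻¹ ≤ B⁻¹ := hB.inv_le_inv_of_le_s6 (Matrix.le_iff.mpr hAB)
  have hinv' : (A + C)⁻¹ ≤ (B + D)⁻¹ := (hB.add_posSemidef hD).inv_le_inv_of_le_s6 hBD
  rw [trace_add]
  exact add_nonneg (hAB.trace_mul_nonneg_s6 (Matrix.le_iff.mp hinv))
    (hCD.trace_mul_nonneg_s6 (Matrix.le_iff.mp hinv'))

theorem trace_case1_nonneg
    {n : ℕ} (A B C D : Matrix (Fin n) (Fin n) ℂ)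
    (hA : A.PosDef) (hB : B.PosDef)
    (hAB : (A - B).PosSemidef)
    (hC : C.PosSemidef) (hD : D.PosSemidef)
    (hCD : (C - D).PosSemidef) :
    0 ≤ ((A - B) * (B⁻¹ - A⁻¹) + (C - D) * ((B + D)⁻¹ - (A + C)⁻¹)).trace :=
  trace_case1_nonneg_general A B C D hB hAB hD hCD
end

section
/- For n×n Hermitian matrices X and Y, Tr(XY) ≥ Σ_{i=1}^n λ_X(i) λ_Y(n−i+1), where λ_X(1) ≤ ... ≤ λ_X(n) and λ_Y(1) ≤ ... ≤ λ_Y(n) are the eigenvalues in increasing order (the trace of a product is bounded below by the anti-ordered pairing of eigenvalues). -/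
/-!
Diagonalise `X = U Λ U*` and `Y = W M W*`. With the unitary `V = U* W`, cyclicity of the trace gives
`Tr (X Y) = Tr (Λ V M V*) = ∑ᵢⱼ |Vᵢⱼ|² λᵢ μⱼ`, and `(|Vᵢⱼ|²)` is doubly stochastic. By Birkhoff's
theorem the linear functional `S ↦ ∑ᵢⱼ Sᵢⱼ λᵢ μⱼ` is minimised over doubly stochastic matrices at a
permutation matrix, where the rearrangement inequality bounds it below by the anti-ordered pairing.
-/

open Matrix ComplexOrder

theorem sum_mul_rev_le_sum_mul_comp_perm {n : ℕ} {a b : Fin n → ℝ} (ha : Monotone a)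
    (hb : Monotone b) (σ : Equiv.Perm (Fin n)) :
    ∑ i, a i * b i.rev ≤ ∑ i, a i * b (σ i) := by
  have hanti : Antivary a (b ∘ Fin.rev) := ha.antivary (hb.comp_antitone Fin.rev_anti)
  simpa using hanti.sum_mul_le_sum_mul_comp_perm (σ := σ.trans Fin.revPerm)

theorem sum_mul_rev_le_dotProduct_mulVec {n : ℕ} {a b : Fin n → ℝ} (ha : Monotone a)
    (hb : Monotone b) {S : Matrix (Fin n) (Fin n) ℝ} (hS : S ∈ doublyStochastic ℝ (Fin n)) :
    ∑ i, a i * b i.rev ≤ a ⬝ᵥ (S *ᵥ b) := by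
  have hlin : IsLinearMap ℝ fun M : Matrix (Fin n) (Fin n) ℝ => a ⬝ᵥ (M *ᵥ b) :=
    ⟨fun M N => by simp [add_mulVec, dotProduct_add], fun c M => by simp [smul_mulVec]⟩
  rw [← SetLike.mem_coe, doublyStochastic_eq_convexHull_permMatrix] at hS
  refine convexHull_min ?_ (convex_halfSpace_ge hlin _) hS
  rintro _ ⟨σ, rfl⟩
  simpa [permMatrix_mulVec, dotProduct] using sum_mul_rev_le_sum_mul_comp_perm ha hb σ

namespace Matrix

variable {𝕜 ι : Type*} [RCLike 𝕜] [Fintype ι] [DecidableEq ι]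

theorem map_norm_sq_mem_doublyStochastic {U : Matrix ι ι 𝕜} (hU : U ∈ unitaryGroup ι 𝕜) :
    U.map (‖·‖ ^ 2) ∈ doublyStochastic ℝ ι := by
  refine mem_doublyStochastic_iff_sum.2 ⟨fun i j => sq_nonneg _, fun i => ?_, fun j => ?_⟩
  · have h := congr_fun₂ (mem_unitaryGroup_iff.1 hU) i i
    simp [mul_apply, RCLike.mul_conj] at h
    exact_mod_cast h
  · have h := congr_fun₂ (mem_unitaryGroup_iff'.1 hU) j j
    simp [mul_apply, RCLike.conj_mul] at h
    exact_mod_cast h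

theorem trace_diagonal_mul_conj_diagonal (d e : ι → ℝ) (V : Matrix ι ι 𝕜) :
    (diagonal (RCLike.ofReal ∘ d) * (V * diagonal (RCLike.ofReal ∘ e) * star V)).trace =
      ((d ⬝ᵥ (V.map (‖·‖ ^ 2) *ᵥ e) : ℝ) : 𝕜) := by
  simp only [trace, diag, diagonal_mul, mul_apply (N := star V), mul_diagonal, star_apply,
    RCLike.star_def, Function.comp_apply, dotProduct, mulVec, map_apply]
  push_cast
  simp_rw [Finset.mul_sum]
  refine Finset.sum_congr rfl fun i _ => Finset.sum_congr rfl fun j _ => ?_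
  rw [← RCLike.mul_conj]
  ring

theorem IsHermitian.trace_mul_eq_dotProduct {X Y : Matrix ι ι 𝕜} (hX : X.IsHermitian)
    (hY : Y.IsHermitian) :
    (X * Y).trace = ((hX.eigenvalues ⬝ᵥ
      ((star (hX.eigenvectorUnitary : Matrix ι ι 𝕜) * hY.eigenvectorUnitary).map (‖·‖ ^ 2) *ᵥ
        hY.eigenvalues) : ℝ) : 𝕜) := by
  rw [← trace_diagonal_mul_conj_diagonal]
  conv_lhs => rw [hX.spectral_theorem, hY.spectral_theorem]
  simp only [Unitary.conjStarAlgAut_apply, star_mul, star_star, Matrix.mul_assoc]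
  rw [trace_mul_comm]
  simp only [Matrix.mul_assoc]

end Matrix

/-- Trace of a product of Hermitian matrices is bounded below by the
anti-ordered pairing of their eigenvalues (listed in increasing order). -/
theorem trace_mul_ge_antiordered_eigenvalue_pairing
    {n : ℕ} (X Y : Matrix (Fin n) (Fin n) ℂ)
    (hX : X.IsHermitian) (hY : Y.IsHermitian)
    (μX μY : Fin n → ℝ) (hμX : Monotone μX) (hμY : Monotone μY)
    (hpermX : ∃ σ : Equiv.Perm (Fin n), μX = hX.eigenvalues ∘ σ)
    (hpermY : ∃ σ : Equiv.Perm (Fin n), μY = hY.eigenvalues ∘ σ) :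
    ((∑ i, μX i * μY i.rev : ℝ) : ℂ) ≤ (X * Y).trace := by
  obtain ⟨σ, rfl⟩ := hpermX
  obtain ⟨τ, rfl⟩ := hpermY
  have hS := map_norm_sq_mem_doublyStochastic
    (star hX.eigenvectorUnitary * hY.eigenvectorUnitary).2
  have hpaired := sum_mul_rev_le_dotProduct_mulVec hμX hμY
    (reindex_mem_doublyStochastic (e₁ := σ.symm) (e₂ := τ.symm) hS)
  rw [reindex_apply, Equiv.symm_symm, Equiv.symm_symm, submatrix_mulVec_equiv,
    Function.comp_assoc, Equiv.self_comp_symm, Function.comp_id,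
    comp_equiv_dotProduct_comp_equiv] at hpaired
  rw [hX.trace_mul_eq_dotProduct hY]
  exact Complex.real_le_real.2 hpaired
end

section
/- For n×n Hermitian matrices X (arbitrary) and Y positive definite, Tr(X Y⁻¹) ≥ Σ_{i=1}^n λ_X(i)/λ_Y(i), where eigenvalues of both X and Y are listed in increasing order. -/
/-!
Diagonalize `X = V diag(x) V*` and `Y = U diag(y) U*`. With `W = U* V` one gets
`Tr(X Y⁻¹) = ∑ᵢⱼ |Wᵢⱼ|² xⱼ / yᵢ`, and the matrix `(|Wᵢⱼ|²)` is doubly stochastic because `W` is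
unitary. By Birkhoff's theorem it is a convex combination of permutation matrices, and for each
permutation the rearrangement inequality bounds the resulting sum below by the pairing of the
increasing `x` with the decreasing `1 / y` in the same order.
-/

open Matrix ComplexOrder

variable {n : Type*} [Fintype n] [DecidableEq n]

theorem Antivary.dotProduct_le_dotProduct_mulVec {R : Type*} [Field R] [LinearOrder R]
    [IsStrictOrderedRing R] {f g : n → R} (hfg : Antivary f g) {M : Matrix n n R}
    (hM : M ∈ doublyStochastic R n) : f ⬝ᵥ g ≤ f ⬝ᵥ (M *ᵥ g) := by
  obtain ⟨w, hw0, hw1, rfl⟩ := exists_eq_sum_perm_of_mem_doublyStochastic hM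
  calc f ⬝ᵥ g = ∑ σ, w σ * (f ⬝ᵥ g) := by rw [← Finset.sum_mul, hw1, one_mul]
    _ ≤ ∑ σ, w σ * (f ⬝ᵥ (g ∘ σ)) := by
        gcongr with σ
        · exact hw0 σ
        · exact hfg.sum_mul_le_sum_mul_comp_perm
    _ = f ⬝ᵥ ((∑ σ, w σ • σ.permMatrix R) *ᵥ g) := by
        simp only [sum_mulVec, smul_mulVec, permMatrix_mulVec, dotProduct_sum, dotProduct_smul,
          smul_eq_mul]

namespace Matrix

variable {𝕜 : Type*} [RCLike 𝕜]

open Unitary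

def entrywiseNormSq (W : Matrix n n 𝕜) : Matrix n n ℝ := of fun i j => ‖W i j‖ ^ 2

theorem entrywiseNormSq_mem_doublyStochastic {W : Matrix n n 𝕜} (hW : W ∈ unitaryGroup n 𝕜) :
    entrywiseNormSq W ∈ doublyStochastic ℝ n := by
  have hdiag (A B : Matrix n n 𝕜) (h : A * B = 1) (i : n) : ∑ j, A i j * B j i = 1 := by
    rw [← mul_apply, h, one_apply_eq]
  refine mem_doublyStochastic_iff_sum.2 ⟨fun i j => sq_nonneg _, fun i => ?_, fun j => ?_⟩
  · have := hdiag _ _ (mem_unitaryGroup_iff.1 hW) i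
    simp only [star_apply, RCLike.star_def, RCLike.mul_conj] at this
    exact_mod_cast this
  · have := hdiag _ _ (mem_unitaryGroup_iff'.1 hW) j
    simp only [star_apply, RCLike.star_def, mul_comm (starRingEnd 𝕜 _), RCLike.mul_conj] at this
    exact_mod_cast this

theorem trace_conj_diagonal_mul_conj_diagonal (U V : unitaryGroup n 𝕜) (a b : n → ℝ) :
    (conjStarAlgAut 𝕜 _ V (diagonal (RCLike.ofReal ∘ a)) *
        conjStarAlgAut 𝕜 _ U (diagonal (RCLike.ofReal ∘ b))).trace =
      ((b ⬝ᵥ (entrywiseNormSq (star (U : Matrix n n 𝕜) * (V : Matrix n n 𝕜)) *ᵥ a) : ℝ) : 𝕜) := by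
  set W := star (U : Matrix n n 𝕜) * (V : Matrix n n 𝕜)
  have hcyc : (conjStarAlgAut 𝕜 _ V (diagonal (RCLike.ofReal ∘ a)) *
        conjStarAlgAut 𝕜 _ U (diagonal (RCLike.ofReal ∘ b))).trace =
      (W * diagonal (RCLike.ofReal ∘ a) * star W * diagonal (RCLike.ofReal ∘ b)).trace := by
    simp only [conjStarAlgAut_apply, W, star_mul, star_star, ← mul_assoc]
    rw [trace_mul_cycle]
    simp only [mul_assoc]
  rw [hcyc]
  simp only [trace, diag_apply, mul_diagonal]
  simp only [mul_apply, star_apply, RCLike.star_def, Function.comp_apply, dotProduct, mulVec,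
    entrywiseNormSq, of_apply, diagonal_apply, mul_ite, mul_zero, Finset.sum_ite_eq',
    Finset.mem_univ, if_true]
  push_cast
  refine Finset.sum_congr rfl fun i _ => ?_
  rw [Finset.sum_mul, Finset.mul_sum]
  refine Finset.sum_congr rfl fun j _ => ?_
  rw [← RCLike.mul_conj]
  ring

theorem IsHermitian.inv_eq_conj_diagonal {A : Matrix n n 𝕜} (hA : A.IsHermitian) (hA' : IsUnit A) :
    A⁻¹ = conjStarAlgAut 𝕜 _ hA.eigenvectorUnitary
      (diagonal (RCLike.ofReal ∘ hA.eigenvalues⁻¹)) := by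
  rw [nonsing_inv_eq_ringInverse,
    ← cfc_ringInverse_id (R := ℝ) (ha_unit := hA') (ha := hA.isSelfAdjoint), hA.cfc_eq]
  rfl

theorem IsHermitian.trace_mul_inv_eq_dotProduct {A B : Matrix n n 𝕜} (hA : A.IsHermitian)
    (hB : B.IsHermitian) (hB' : IsUnit B) :
    (A * B⁻¹).trace = ((hB.eigenvalues⁻¹ ⬝ᵥ (entrywiseNormSq
      (star (hB.eigenvectorUnitary : Matrix n n 𝕜) * (hA.eigenvectorUnitary : Matrix n n 𝕜)) *ᵥ
        hA.eigenvalues) : ℝ) : 𝕜) := by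
  conv_lhs => rw [hA.spectral_theorem, hB.inv_eq_conj_diagonal hB']
  exact trace_conj_diagonal_mul_conj_diagonal _ _ _ _

end Matrix

theorem trace_mul_inv_ge_ordered_eigenvalue_ratio
    {n : ℕ} (X Y : Matrix (Fin n) (Fin n) ℂ)
    (hX : X.IsHermitian) (hY : Y.PosDef)
    (μX μY : Fin n → ℝ) (hμX : Monotone μX) (hμY : Monotone μY)
    (hpermX : ∃ σ : Equiv.Perm (Fin n), μX = hX.eigenvalues ∘ σ)
    (hpermY : ∃ σ : Equiv.Perm (Fin n), μY = hY.isHermitian.eigenvalues ∘ σ) :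
    ((∑ i, μX i / μY i : ℝ) : ℂ) ≤ (X * Y⁻¹).trace := by
  obtain ⟨σX, rfl⟩ := hpermX
  obtain ⟨σY, rfl⟩ := hpermY
  set M := entrywiseNormSq (star (hY.isHermitian.eigenvectorUnitary : Matrix (Fin n) (Fin n) ℂ) *
    (hX.eigenvectorUnitary : Matrix (Fin n) (Fin n) ℂ))
  have hM : M.submatrix σY σX ∈ doublyStochastic ℝ (Fin n) :=
    reindex_mem_doublyStochastic (e₁ := σY.symm) (e₂ := σX.symm)
      (entrywiseNormSq_mem_doublyStochastic (star hY.isHermitian.eigenvectorUnitary *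
        hX.eigenvectorUnitary).2)
  have hanti : Antivary (hY.isHermitian.eigenvalues ∘ σY)⁻¹ (hX.eigenvalues ∘ σX) :=
    Antitone.antivary (fun i j hij => inv_anti₀ (hY.eigenvalues_pos _) (hμY hij)) hμX
  rw [hX.trace_mul_inv_eq_dotProduct hY.isHermitian hY.isUnit]
  refine Complex.real_le_real.2 ?_
  calc ∑ i, (hX.eigenvalues ∘ σX) i / (hY.isHermitian.eigenvalues ∘ σY) i
      = (hY.isHermitian.eigenvalues ∘ σY)⁻¹ ⬝ᵥ (hX.eigenvalues ∘ σX) := by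
        simp only [dotProduct, div_eq_inv_mul, Pi.inv_apply]
    _ ≤ (hY.isHermitian.eigenvalues ∘ σY)⁻¹ ⬝ᵥ (M.submatrix σY σX *ᵥ (hX.eigenvalues ∘ σX)) :=
        hanti.dotProduct_le_dotProduct_mulVec hM
    _ = hY.isHermitian.eigenvalues⁻¹ ⬝ᵥ (M *ᵥ hX.eigenvalues) := by
        rw [submatrix_mulVec_equiv, Function.comp_assoc, Equiv.self_comp_symm, Function.comp_id,
          ← Pi.inv_comp, comp_equiv_dotProduct_comp_equiv]
end

section
/- For Hermitian positive definite n×n matrices A and B, Tr{A B⁻¹(B+I)⁻¹ + B A⁻¹(A+I)⁻¹ − (A+I)⁻¹ − (B+I)⁻¹} ≥ Σ_{i=1}^n (λ_A(i)−λ_B(i))²(1+λ_A(i)+λ_B(i)) / [λ_A(i)λ_B(i)(1+λ_A(i))(1+λ_B(i))] ≥ 0, where eigenvalues are listed in increasing order. -/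
/-!
Diagonalise `A = U diag(a) U*` and `B = V diag(b) V*`. For functions `f, g` of the eigenvalues,
`tr (f(A) g(B)) = ∑ i j, P i j * f (a i) * g (b j)` with `P i j = ‖(U* V) i j‖²`, a doubly
stochastic matrix since `U* V` is unitary. The trace in question is therefore
`∑ i j, P i j * (a i / (b j (b j + 1)) + b j / (a i (a i + 1))) - ∑ 1 / (a i + 1) - ∑ 1 / (b j + 1)`.
By Birkhoff's theorem this linear function of `P` is minimised at a permutation matrix, and since
`t ↦ 1 / (t (t + 1))` is decreasing, the rearrangement inequality says that the best permutation
pairs the eigenvalues of `A` and `B` in the same order. For that pairing the right-hand side is the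
eigenvalue sum, term by term.
-/

open Finset Matrix Unitary ComplexOrder

theorem Antivary.sum_mul_le_sum_sum_doublyStochastic_mul {ι R : Type*} [Fintype ι]
    [DecidableEq ι] [Field R] [LinearOrder R] [IsStrictOrderedRing R] {x y : ι → R}
    (hxy : Antivary x y) {P : Matrix ι ι R} (hP : P ∈ doublyStochastic R ι) :
    ∑ i, x i * y i ≤ ∑ i, ∑ j, P i j * (x i * y j) := by
  have hlin : IsLinearMap R fun M : Matrix ι ι R ↦ ∑ i, ∑ j, M i j * (x i * y j) := by
    constructor <;> intros <;> simp [add_mul, sum_add_distrib, mul_sum, mul_assoc]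
  rw [← SetLike.mem_coe, doublyStochastic_eq_convexHull_permMatrix] at hP
  refine convexHull_min ?_ (convex_halfSpace_ge hlin _) hP
  rintro _ ⟨σ, rfl⟩
  simpa [PEquiv.toMatrix_apply, Equiv.toPEquiv_apply] using
    hxy.sum_mul_le_sum_mul_comp_perm (σ := σ)

theorem Matrix.map_norm_sq_mem_doublyStochastic_s11 {ι 𝕜 : Type*} [Fintype ι] [DecidableEq ι]
    [RCLike 𝕜] {W : Matrix ι ι 𝕜} (hW : W ∈ unitaryGroup ι 𝕜) :
    W.map (‖·‖ ^ 2) ∈ doublyStochastic ℝ ι := by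
  rw [mem_doublyStochastic_iff_sum]
  refine ⟨fun i j ↦ sq_nonneg _, fun i ↦ ?_, fun j ↦ ?_⟩
  · have h := congr_fun (congr_fun (mem_unitaryGroup_iff.mp hW) i) i
    simp only [mul_apply, star_apply, RCLike.star_def, RCLike.mul_conj, one_apply_eq] at h
    exact_mod_cast h
  · have h := congr_fun (congr_fun (mem_unitaryGroup_iff'.mp hW) j) j
    simp only [mul_apply, star_apply, RCLike.star_def, RCLike.conj_mul, one_apply_eq] at h
    exact_mod_cast h

lemma Matrix.sum_sum_submatrix_mul {ι R : Type*} [Fintype ι] [NonUnitalNonAssocSemiring R]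
    (P : Matrix ι ι R) (σ τ : Equiv.Perm ι) (F : ι → ι → R) :
    ∑ i, ∑ j, P.submatrix σ τ i j * F (σ i) (τ j) = ∑ i, ∑ j, P i j * F i j :=
  Fintype.sum_equiv σ _ _ fun _ ↦ Fintype.sum_equiv τ _ _ fun _ ↦ rfl

namespace Matrix.IsHermitian

variable {n 𝕜 : Type*} [Fintype n] [DecidableEq n] [RCLike 𝕜] {A B : Matrix n n 𝕜}

lemma cfc_congr (hA : A.IsHermitian) {f g : ℝ → ℝ}
    (hfg : ∀ i, f (hA.eigenvalues i) = g (hA.eigenvalues i)) : hA.cfc f = hA.cfc g := by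
  simp only [IsHermitian.cfc, Function.comp_def, hfg]

lemma cfc_id (hA : A.IsHermitian) : hA.cfc id = A :=
  hA.spectral_theorem.symm

lemma cfc_one (hA : A.IsHermitian) : hA.cfc 1 = 1 := by
  simp [IsHermitian.cfc, Function.comp_def]

lemma cfc_add (hA : A.IsHermitian) (f g : ℝ → ℝ) : hA.cfc (f + g) = hA.cfc f + hA.cfc g := by
  simp only [IsHermitian.cfc, ← map_add, diagonal_add]
  congr with i
  simp

lemma cfc_mul (hA : A.IsHermitian) (f g : ℝ → ℝ) : hA.cfc (f * g) = hA.cfc f * hA.cfc g := by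
  simp only [IsHermitian.cfc, ← map_mul, diagonal_mul_diagonal]
  congr with i
  simp

lemma inv_cfc (hA : A.IsHermitian) {f : ℝ → ℝ} (hf : ∀ i, f (hA.eigenvalues i) ≠ 0) :
    (hA.cfc f)⁻¹ = hA.cfc f⁻¹ := by
  refine inv_eq_right_inv ?_
  rw [← hA.cfc_mul, hA.cfc_congr (g := 1) fun i ↦ mul_inv_cancel₀ (hf i), hA.cfc_one]

lemma trace_cfc (hA : A.IsHermitian) (f : ℝ → ℝ) :
    (hA.cfc f).trace = ((∑ i, f (hA.eigenvalues i) : ℝ) : 𝕜) := by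
  rw [IsHermitian.cfc, conjStarAlgAut_apply, trace_mul_cycle, coe_star_mul_self, one_mul,
    trace_diagonal]
  push_cast
  rfl

lemma trace_cfc_mul_cfc (hA : A.IsHermitian) (hB : B.IsHermitian) (f g : ℝ → ℝ) :
    (hA.cfc f * hB.cfc g).trace =
      ((∑ i, ∑ j, ((star (hA.eigenvectorUnitary : Matrix n n 𝕜) * hB.eigenvectorUnitary).map
        (‖·‖ ^ 2)) i j * (f (hA.eigenvalues i) * g (hB.eigenvalues j)) : ℝ) : 𝕜) := by
  set U : Matrix n n 𝕜 := ↑hA.eigenvectorUnitary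
  set V : Matrix n n 𝕜 := ↑hB.eigenvectorUnitary
  have hcycle : (hA.cfc f * hB.cfc g).trace = (diagonal (RCLike.ofReal ∘ f ∘ hA.eigenvalues) *
      (star U * V) * diagonal (RCLike.ofReal ∘ g ∘ hB.eigenvalues) * star (star U * V)).trace := by
    simp only [IsHermitian.cfc, conjStarAlgAut_apply, star_mul, star_star, Matrix.mul_assoc]
    rw [trace_mul_comm]
    simp only [Matrix.mul_assoc]
    rfl
  rw [hcycle]
  generalize star U * V = W
  simp only [trace, diag, mul_apply (M := _ * W * _), mul_diagonal, diagonal_mul, star_apply,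
    RCLike.star_def]
  push_cast
  refine sum_congr rfl fun i _ ↦ sum_congr rfl fun j _ ↦ ?_
  simp only [Function.comp_apply, map_apply, RCLike.ofReal_pow, ← RCLike.mul_conj]
  ring

end Matrix.IsHermitian

namespace Matrix

variable {n 𝕜 : Type*} [Fintype n] [DecidableEq n] [RCLike 𝕜] {A : Matrix n n 𝕜}

lemma PosSemidef.inv_add_one_eq_cfc (hA : A.PosSemidef) :
    (A + 1)⁻¹ = hA.isHermitian.cfc fun t ↦ (t + 1)⁻¹ := by
  calc (A + 1)⁻¹ = (hA.isHermitian.cfc (id + 1))⁻¹ := by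
        rw [hA.isHermitian.cfc_add, hA.isHermitian.cfc_id, hA.isHermitian.cfc_one]
    _ = _ := hA.isHermitian.inv_cfc fun i ↦ by
        have := hA.eigenvalues_nonneg i
        simp only [Pi.add_apply, id, Pi.one_apply]
        positivity

lemma PosDef.inv_mul_inv_add_one_eq_cfc (hA : A.PosDef) :
    A⁻¹ * (A + 1)⁻¹ = hA.isHermitian.cfc fun t ↦ (t * (t + 1))⁻¹ := by
  calc A⁻¹ * (A + 1)⁻¹ = (hA.isHermitian.cfc id)⁻¹ * hA.isHermitian.cfc fun t ↦ (t + 1)⁻¹ := by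
        rw [hA.isHermitian.cfc_id, hA.posSemidef.inv_add_one_eq_cfc]
    _ = hA.isHermitian.cfc (id⁻¹ * fun t ↦ (t + 1)⁻¹) := by
        rw [hA.isHermitian.inv_cfc fun i ↦ (hA.eigenvalues_pos i).ne', hA.isHermitian.cfc_mul]
    _ = _ := by
        congr with t
        simp only [Pi.mul_apply, Pi.inv_apply, id, mul_inv]

end Matrix

lemma sq_sub_mul_div_eq {x y : ℝ} (hx : 0 < x) (hy : 0 < y) :
    (x - y) ^ 2 * (1 + x + y) / (x * y * (1 + x) * (1 + y)) =
      x * (y * (y + 1))⁻¹ + (x * (x + 1))⁻¹ * y - (x + 1)⁻¹ - (y + 1)⁻¹ := by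
  field_simp
  ring

lemma inv_mul_add_one_le_inv_mul_add_one {s t : ℝ} (hs : 0 < s) (hst : s ≤ t) :
    (t * (t + 1))⁻¹ ≤ (s * (s + 1))⁻¹ := by
  have := hs.trans_le hst
  gcongr

theorem sum_sq_sub_mul_div_le {ι : Type*} [Fintype ι] [DecidableEq ι]
    {x y : ι → ℝ} (hxy : Monovary x y) (hxpos : ∀ i, 0 < x i) (hypos : ∀ i, 0 < y i)
    {P : Matrix ι ι ℝ} (hP : P ∈ doublyStochastic ℝ ι) :
    ∑ i, (x i - y i) ^ 2 * (1 + x i + y i) / (x i * y i * (1 + x i) * (1 + y i)) ≤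
      ∑ i, ∑ j, P i j * (x i * (y j * (y j + 1))⁻¹) +
        ∑ i, ∑ j, P i j * ((x i * (x i + 1))⁻¹ * y j) - ∑ i, (x i + 1)⁻¹ - ∑ i, (y i + 1)⁻¹ := by
  have hxy' : Antivary x fun i ↦ (y i * (y i + 1))⁻¹ := fun i j hij ↦
    hxy <| lt_of_not_ge fun hji ↦ hij.not_ge <| inv_mul_add_one_le_inv_mul_add_one (hypos i) hji
  have hyx' : Antivary (fun i ↦ (x i * (x i + 1))⁻¹) y := fun i j hij ↦
    inv_mul_add_one_le_inv_mul_add_one (hxpos i) (hxy hij)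
  have h₁ := hxy'.sum_mul_le_sum_sum_doublyStochastic_mul hP
  have h₂ := hyx'.sum_mul_le_sum_sum_doublyStochastic_mul hP
  simp only [sq_sub_mul_div_eq (hxpos _) (hypos _), sum_sub_distrib, sum_add_distrib]
  linarith

theorem trace_lower_bound_eigenvalue_sum
    {n : ℕ} (A B : Matrix (Fin n) (Fin n) ℂ)
    (hA : A.PosDef) (hB : B.PosDef)
    (μA μB : Fin n → ℝ) (hμA : Monotone μA) (hμB : Monotone μB)
    (hpermA : ∃ σ : Equiv.Perm (Fin n), μA = hA.isHermitian.eigenvalues ∘ σ)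
    (hpermB : ∃ σ : Equiv.Perm (Fin n), μB = hB.isHermitian.eigenvalues ∘ σ) :
    ((∑ i, (μA i - μB i) ^ 2 * (1 + μA i + μB i)
        / (μA i * μB i * (1 + μA i) * (1 + μB i)) : ℝ) : ℂ)
      ≤ (A * B⁻¹ * (B + 1)⁻¹ + B * A⁻¹ * (A + 1)⁻¹ - (A + 1)⁻¹ - (B + 1)⁻¹).trace
    ∧ 0 ≤ (∑ i, (μA i - μB i) ^ 2 * (1 + μA i + μB i)
        / (μA i * μB i * (1 + μA i) * (1 + μB i)) : ℝ) := by
  obtain ⟨σ, rfl⟩ := hpermA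
  obtain ⟨τ, rfl⟩ := hpermB
  have hT₁ := hA.isHermitian.trace_cfc_mul_cfc hB.isHermitian id fun t ↦ (t * (t + 1))⁻¹
  have hT₂ := hA.isHermitian.trace_cfc_mul_cfc hB.isHermitian (fun t ↦ (t * (t + 1))⁻¹) id
  rw [hA.isHermitian.cfc_id] at hT₁
  rw [hB.isHermitian.cfc_id] at hT₂
  set a := hA.isHermitian.eigenvalues
  set b := hB.isHermitian.eigenvalues
  set P := (star (hA.isHermitian.eigenvectorUnitary : Matrix (Fin n) (Fin n) ℂ) *
    hB.isHermitian.eigenvectorUnitary).map (‖·‖ ^ 2)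
  have ha (i : Fin n) : 0 < (a ∘ σ) i := hA.eigenvalues_pos _
  have hb (i : Fin n) : 0 < (b ∘ τ) i := hB.eigenvalues_pos _
  have hP : P.submatrix σ τ ∈ doublyStochastic ℝ (Fin n) := by
    have hW := map_norm_sq_mem_doublyStochastic_s11 <|
      mul_mem (star_mem hA.isHermitian.eigenvectorUnitary.2) hB.isHermitian.eigenvectorUnitary.2
    simpa [reindex_apply] using reindex_mem_doublyStochastic (e₁ := σ.symm) (e₂ := τ.symm) hW
  refine ⟨?_, sum_nonneg fun i _ ↦ by have := ha i; have := hb i; positivity⟩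
  rw [trace_sub, trace_sub, trace_add, Matrix.mul_assoc, Matrix.mul_assoc, trace_mul_comm B,
    hA.inv_mul_inv_add_one_eq_cfc, hB.inv_mul_inv_add_one_eq_cfc, hT₁, hT₂,
    hA.posSemidef.inv_add_one_eq_cfc, hB.posSemidef.inv_add_one_eq_cfc, hA.isHermitian.trace_cfc,
    hB.isHermitian.trace_cfc, ← P.sum_sum_submatrix_mul σ τ, ← P.sum_sum_submatrix_mul σ τ,
    ← Equiv.sum_comp σ fun i ↦ (a i + 1)⁻¹, ← Equiv.sum_comp τ fun i ↦ (b i + 1)⁻¹]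
  norm_cast
  exact Complex.real_le_real.mpr (sum_sq_sub_mul_div_le (hμA.monovary hμB) ha hb hP)
end

section
/- Rosen uniqueness (2-player scalar case): let A₁, A₂ ⊆ ℝ be compact convex intervals and u₁, u₂ continuously differentiable utilities, each u_k concave in its own variable. If for all (a₁',a₂') ≠ (a₁'',a₂'') in A₁×A₂ the diagonally strict concavity condition (a₁''−a₁')[∂₁u₁(a₁',a₂') − ∂₁u₁(a₁'',a₂'')] + (a₂''−a₂')[∂₂u₂(a₁',a₂') − ∂₂u₂(a₁'',a₂'')] > 0 holds, then the game has at most one Nash equilibrium. -/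
/-! At a Nash equilibrium each player's own-variable first-order condition holds, so the
pseudo-gradient `(∂₁u₁, ∂₂u₂)` satisfies a variational inequality on `A₁ × A₂`. Writing it at
two equilibria `a`, `b` (against each other) and adding gives exactly the negation of diagonally
strict concavity at the pair `(a, b)`, so `a = b`. -/

theorem Convex.sub_mul_le_zero_of_isMaxOn {s : Set ℝ} (hs : Convex ℝ s) {f : ℝ → ℝ}
    {a x d : ℝ} (ha : a ∈ s) (hx : x ∈ s) (hmax : IsMaxOn f s a)
    (hf : HasDerivWithinAt f d s a) : (x - a) * d ≤ 0 := by
  have hcone : x - a ∈ posTangentConeAt s a :=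
    sub_mem_posTangentConeAt_of_segment_subset (hs.segment_subset ha hx)
  simpa [mul_comm] using hmax.localize.hasFDerivWithinAt_nonpos hf.hasFDerivWithinAt hcone

theorem nash_variational_inequality {A₁ A₂ : Set ℝ} (hA₁ : Convex ℝ A₁) (hA₂ : Convex ℝ A₂)
    {u₁ u₂ : ℝ → ℝ → ℝ} {a₁ a₂ b₁ b₂ e₁ e₂ : ℝ}
    (he₁ : HasDerivAt (fun x => u₁ x a₂) e₁ a₁) (he₂ : HasDerivAt (fun y => u₂ a₁ y) e₂ a₂)
    (ha₁ : a₁ ∈ A₁) (ha₂ : a₂ ∈ A₂) (hb₁ : b₁ ∈ A₁) (hb₂ : b₂ ∈ A₂)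
    (hNash : (∀ x ∈ A₁, u₁ x a₂ ≤ u₁ a₁ a₂) ∧ (∀ y ∈ A₂, u₂ a₁ y ≤ u₂ a₁ a₂)) :
    (b₁ - a₁) * e₁ + (b₂ - a₂) * e₂ ≤ 0 :=
  add_nonpos
    (hA₁.sub_mul_le_zero_of_isMaxOn ha₁ hb₁ hNash.1 he₁.hasDerivWithinAt)
    (hA₂.sub_mul_le_zero_of_isMaxOn ha₂ hb₂ hNash.2 he₂.hasDerivWithinAt)

theorem nash_equilibrium_unique_of_dsc_general
    (l₁ r₁ l₂ r₂ : ℝ)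
    (A₁ A₂ : Set ℝ) (hA₁ : A₁ = Set.Icc l₁ r₁) (hA₂ : A₂ = Set.Icc l₂ r₂)
    (u₁ u₂ : ℝ → ℝ → ℝ)
    (d₁ d₂ : ℝ → ℝ → ℝ)
    -- u_k is differentiable in its own variable with partial derivative d_k
    (hd₁ : ∀ a₁ a₂, HasDerivAt (fun x => u₁ x a₂) (d₁ a₁ a₂) a₁)
    (hd₂ : ∀ a₁ a₂, HasDerivAt (fun y => u₂ a₁ y) (d₂ a₁ a₂) a₂)
    -- diagonally strict concavity
    (hdsc : ∀ a₁' ∈ A₁, ∀ a₂' ∈ A₂, ∀ a₁'' ∈ A₁, ∀ a₂'' ∈ A₂,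
      (a₁', a₂') ≠ (a₁'', a₂'') →
      0 < (a₁'' - a₁') * (d₁ a₁' a₂' - d₁ a₁'' a₂'')
        + (a₂'' - a₂') * (d₂ a₁' a₂' - d₂ a₁'' a₂'')) :
    ∀ a₁ ∈ A₁, ∀ a₂ ∈ A₂, ∀ b₁ ∈ A₁, ∀ b₂ ∈ A₂,
      ((∀ x ∈ A₁, u₁ x a₂ ≤ u₁ a₁ a₂) ∧ (∀ y ∈ A₂, u₂ a₁ y ≤ u₂ a₁ a₂)) →
      ((∀ x ∈ A₁, u₁ x b₂ ≤ u₁ b₁ b₂) ∧ (∀ y ∈ A₂, u₂ b₁ y ≤ u₂ b₁ b₂)) →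
      (a₁, a₂) = (b₁, b₂) := by
  intro a₁ ha₁ a₂ ha₂ b₁ hb₁ b₂ hb₂ hNa hNb
  have hconv₁ : Convex ℝ A₁ := hA₁ ▸ convex_Icc l₁ r₁
  have hconv₂ : Convex ℝ A₂ := hA₂ ▸ convex_Icc l₂ r₂
  by_contra hne
  have hab := nash_variational_inequality hconv₁ hconv₂ (hd₁ a₁ a₂) (hd₂ a₁ a₂)
    ha₁ ha₂ hb₁ hb₂ hNa
  have hba := nash_variational_inequality hconv₁ hconv₂ (hd₁ b₁ b₂) (hd₂ b₁ b₂)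
    hb₁ hb₂ ha₁ ha₂ hNb
  linarith [hdsc a₁ ha₁ a₂ ha₂ b₁ hb₁ b₂ hb₂ hne]

theorem nash_equilibrium_unique_of_dsc
    (l₁ r₁ l₂ r₂ : ℝ) (h₁ : l₁ ≤ r₁) (h₂ : l₂ ≤ r₂)
    (A₁ A₂ : Set ℝ) (hA₁ : A₁ = Set.Icc l₁ r₁) (hA₂ : A₂ = Set.Icc l₂ r₂)
    (u₁ u₂ : ℝ → ℝ → ℝ)
    (d₁ d₂ : ℝ → ℝ → ℝ)
    -- u_k is differentiable in its own variable with partial derivative d_k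
    (hd₁ : ∀ a₁ a₂, HasDerivAt (fun x => u₁ x a₂) (d₁ a₁ a₂) a₁)
    (hd₂ : ∀ a₁ a₂, HasDerivAt (fun y => u₂ a₁ y) (d₂ a₁ a₂) a₂)
    -- the partial derivatives are continuous (C¹ utilities)
    (hd₁c : Continuous (fun q : ℝ × ℝ => d₁ q.1 q.2))
    (hd₂c : Continuous (fun q : ℝ × ℝ => d₂ q.1 q.2))
    -- each utility is concave in its own variable
    (hconc₁ : ∀ a₂ ∈ A₂, ConcaveOn ℝ A₁ (fun x => u₁ x a₂))
    (hconc₂ : ∀ a₁ ∈ A₁, ConcaveOn ℝ A₂ (fun y => u₂ a₁ y))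
    -- diagonally strict concavity
    (hdsc : ∀ a₁' ∈ A₁, ∀ a₂' ∈ A₂, ∀ a₁'' ∈ A₁, ∀ a₂'' ∈ A₂,
      (a₁', a₂') ≠ (a₁'', a₂'') →
      0 < (a₁'' - a₁') * (d₁ a₁' a₂' - d₁ a₁'' a₂'')
        + (a₂'' - a₂') * (d₂ a₁' a₂' - d₂ a₁'' a₂'')) :
    ∀ a₁ ∈ A₁, ∀ a₂ ∈ A₂, ∀ b₁ ∈ A₁, ∀ b₂ ∈ A₂,
      ((∀ x ∈ A₁, u₁ x a₂ ≤ u₁ a₁ a₂) ∧ (∀ y ∈ A₂, u₂ a₁ y ≤ u₂ a₁ a₂)) →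
      ((∀ x ∈ A₁, u₁ x b₂ ≤ u₁ b₁ b₂) ∧ (∀ y ∈ A₂, u₂ b₁ y ≤ u₂ b₁ b₂)) →
      (a₁, a₂) = (b₁, b₂) :=
  nash_equilibrium_unique_of_dsc_general l₁ r₁ l₂ r₂ A₁ A₂ hA₁ hA₂ u₁ u₂ d₁ d₂ hd₁ hd₂ hdsc
end
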